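/- All-or-nothing tradeoff: On a reachable network with n nodes, the all-or-nothing noise mechanism D with utility parameter α satisfies Π(D) = (1 − 2/n)(1 − α), where Π is the privacy metric. -/

import Mathlib

open Finset

/-- An adversarial strategy assigns, to each observed set of revealed oriented
edges, a probability distribution on the nodes. -/
def ValidAdv {V : Type} [Fintype V] [DecidableEq V]
    (A : Finset (V × V) → V → ℝ) : Prop :=
  ∀ Q, (∀ v, 0 ≤ A Q v) ∧ (∑ v, A Q v) = 1

/-- Success probability of adversary `A` against a noise mechanism `D` on path `i`:
Σ_{Q ⊆ P} D[Q|P] · A[∂P|Q], where A[∂P|Q] = A[s(P)|Q] + A[d(P)|Q]. -/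
def AdvSucc {V : Type} [Fintype V] [DecidableEq V]
    {ι : Type} (s d : ι → V) (edges : ι → Finset (V × V))
    (D : ι → Finset (V × V) → ℝ) (A : Finset (V × V) → V → ℝ) (i : ι) : ℝ :=
  ∑ Q ∈ (edges i).powerset, D i Q * (A Q (s i) + A Q (d i))

/-- Privacy metric Π(D) = 1 − sup_A min_{P ∈ 𝒫} Σ_{Q ⊆ P} D[Q|P]·A[∂P|Q]. -/
noncomputable def Privacy {V : Type} [Fintype V] [DecidableEq V]
    {ι : Type} (s d : ι → V) (edges : ι → Finset (V × V))
    (D : ι → Finset (V × V) → ℝ) : ℝ :=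
  1 - sSup { x : ℝ | ∃ A, ValidAdv A ∧
      x = sInf { y : ℝ | ∃ i : ι, y = AdvSucc s d edges D A i } }

/-- The all-or-nothing noise mechanism with utility parameter `α`: reveal the
entire path with probability α, reveal nothing with probability 1−α. -/
noncomputable def AllOrNothing {V : Type} [Fintype V] [DecidableEq V]
    {ι : Type} (edges : ι → Finset (V × V)) (α : ℝ) :
    ι → Finset (V × V) → ℝ :=
  fun i Q => if Q = edges i then α else if Q = ∅ then 1 - α else 0

/-- All-or-nothing tradeoff: on a reachable network with n nodes, the
all-or-nothing mechanism with utility α has privacy Π = (1 − 2/n)(1 − α). -/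
theorem all_or_nothing_tradeoff
    {V : Type} [Fintype V] [DecidableEq V]
    {ι : Type} [Fintype ι] [Nonempty ι]
    (s d : ι → V) (edges : ι → Finset (V × V))
    (hsd : ∀ i, s i ≠ d i)
    (hne : ∀ i, (edges i).Nonempty)
    (hreach : ∀ u v : V, u ≠ v →
      ∃ i, (s i = u ∧ d i = v) ∨ (s i = v ∧ d i = u))
    -- observing the full path identifies its endpoints (A[∂P|P] = 1 achievable)
    (hid : ∀ i j : ι, edges i = edges j → ({s i, d i} : Finset V) = {s j, d j})
    (n : ℕ) (hn : n = Fintype.card V)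
    (α : ℝ) (hα0 : 0 ≤ α) (hα1 : α ≤ 1) :
    Privacy s d edges (AllOrNothing edges α) = (1 - 2 / n) * (1 - α) := by
  classical
  have hcard : 1 < Fintype.card V := Fintype.one_lt_card_iff_nontrivial.mpr
    ⟨⟨s (Classical.arbitrary ι), d (Classical.arbitrary ι), hsd _⟩⟩
  have hn2 : 2 ≤ n := by omega
  have hnR : (0:ℝ) < (n:ℝ) := by
    have : 0 < n := by omega
    exact_mod_cast this
  set M : ℝ := α + (1 - α) * (2 / n) with hM
  -- simplification of AdvSucc for the all-or-nothing mechanism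
  have succ_eq : ∀ (A : Finset (V × V) → V → ℝ) (i : ι),
      AdvSucc s d edges (AllOrNothing edges α) A i =
        α * (A (edges i) (s i) + A (edges i) (d i)) +
        (1 - α) * (A ∅ (s i) + A ∅ (d i)) := by
    intro A i
    unfold AdvSucc AllOrNothing
    rw [Finset.sum_eq_add_of_mem (edges i) ∅ (mem_powerset_self _)
      (mem_powerset.mpr (empty_subset _)) (hne i).ne_empty ?_]
    · simp [(hne i).ne_empty.symm]
    · rintro c _ ⟨h1, h2⟩
      simp [h1, h2]
  -- nonnegativity / boundedness facts for a valid adversary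
  have succ_bounds : ∀ (A : Finset (V × V) → V → ℝ), ValidAdv A →
      ∀ i, 0 ≤ AdvSucc s d edges (AllOrNothing edges α) A i := by
    intro A hA i
    rw [succ_eq]
    have h1 := (hA (edges i)).1
    have h2 := (hA ∅).1
    have := h1 (s i); have := h1 (d i); have := h2 (s i); have := h2 (d i)
    nlinarith
  have pair_le : ∀ (A : Finset (V × V) → V → ℝ), ValidAdv A →
      ∀ Q, ∀ u v : V, u ≠ v → A Q u + A Q v ≤ 1 := by
    intro A hA Q u v huv
    have h1 := (hA Q).1
    have h2 := (hA Q).2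
    calc A Q u + A Q v = ∑ w ∈ ({u, v} : Finset V), A Q w := (Finset.sum_pair huv).symm
      _ ≤ ∑ w, A Q w := Finset.sum_le_sum_of_subset_of_nonneg (subset_univ _)
            (fun w _ _ => h1 w)
      _ = 1 := h2
  -- the optimal adversary
  set A0 : Finset (V × V) → V → ℝ := fun Q v =>
    if h : ∃ j, edges j = Q then
      (if v = s h.choose ∨ v = d h.choose then 1 / 2 else 0)
    else 1 / n with hA0def
  have hA0valid : ValidAdv A0 := by
    intro Q
    constructor
    · intro v
      simp only [hA0def]
      split_ifs <;> positivity
    · by_cases h : ∃ j, edges j = Q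
      · simp only [hA0def, dif_pos h]
        have hpair : ∀ v : V, (if v = s h.choose ∨ v = d h.choose then (1/2 : ℝ) else 0) =
            if v ∈ ({s h.choose, d h.choose} : Finset V) then (1/2 : ℝ) else 0 := by
          intro v; simp
        rw [Finset.sum_congr rfl (fun v _ => hpair v), Finset.sum_ite_mem,
          Finset.univ_inter, Finset.sum_const, Finset.card_pair (hsd h.choose)]
        norm_num
      · simp only [hA0def, dif_neg h]
        rw [Finset.sum_const, Finset.card_univ, ← hn]
        rw [nsmul_eq_mul]; field_simp [hnR.ne']
  have hA0succ : ∀ i, AdvSucc s d edges (AllOrNothing edges α) A0 i = M := by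
    intro i
    rw [succ_eq]
    have hex : ∃ j, edges j = edges i := ⟨i, rfl⟩
    have hj : edges hex.choose = edges i := hex.choose_spec
    have hset : ({s hex.choose, d hex.choose} : Finset V) = {s i, d i} := hid _ _ hj
    have hs' : s i = s hex.choose ∨ s i = d hex.choose := by
      have : s i ∈ ({s hex.choose, d hex.choose} : Finset V) := by
        rw [hset]; simp
      simpa using this
    have hd' : d i = s hex.choose ∨ d i = d hex.choose := by
      have : d i ∈ ({s hex.choose, d hex.choose} : Finset V) := by
        rw [hset]; simp
      simpa using this
    have hnoe : ¬ ∃ j, edges j = (∅ : Finset (V × V)) := by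
      rintro ⟨j, hj'⟩; exact (hne j).ne_empty hj'
    have e1 : A0 (edges i) (s i) = 1/2 := by simp only [hA0def, dif_pos hex, if_pos hs']
    have e2 : A0 (edges i) (d i) = 1/2 := by simp only [hA0def, dif_pos hex, if_pos hd']
    have e3 : A0 ∅ (s i) = 1/n := by simp only [hA0def, dif_neg hnoe]
    have e4 : A0 ∅ (d i) = 1/n := by simp only [hA0def, dif_neg hnoe]
    rw [e1, e2, e3, e4, hM]
    ring
  have hMmem : M ∈ { x : ℝ | ∃ A, ValidAdv A ∧
      x = sInf { y : ℝ | ∃ i : ι, y = AdvSucc s d edges (AllOrNothing edges α) A i } } := by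
    refine ⟨A0, hA0valid, ?_⟩
    have : { y : ℝ | ∃ i : ι, y = AdvSucc s d edges (AllOrNothing edges α) A0 i } = {M} := by
      ext y
      simp only [Set.mem_setOf_eq, Set.mem_singleton_iff]
      constructor
      · rintro ⟨i, rfl⟩; exact hA0succ i
      · rintro rfl; exact ⟨Classical.arbitrary ι, (hA0succ _).symm⟩
    rw [this, csInf_singleton]
  -- upper bound
  have hub : ∀ x ∈ { x : ℝ | ∃ A, ValidAdv A ∧
      x = sInf { y : ℝ | ∃ i : ι, y = AdvSucc s d edges (AllOrNothing edges α) A i } },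
      x ≤ M := by
    rintro x ⟨A, hA, rfl⟩
    -- find a pair with small mass under A ∅
    have hf1 : ∑ v, A ∅ v = 1 := (hA ∅).2
    have hprod : ∑ p ∈ (univ : Finset V) ×ˢ univ, (A ∅ p.1 + A ∅ p.2) = 2 * n := by
      rw [Finset.sum_product]
      have hrow : ∀ x : V, ∑ y : V, (A ∅ x + A ∅ y) = (n : ℝ) * A ∅ x + 1 := by
        intro x
        rw [Finset.sum_add_distrib, Finset.sum_const, Finset.card_univ, ← hn, hf1,
          nsmul_eq_mul]
      rw [Finset.sum_congr rfl fun x _ => hrow x, Finset.sum_add_distrib,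
        ← Finset.mul_sum, hf1, Finset.sum_const, Finset.card_univ, ← hn, nsmul_eq_mul]
      ring
    have hdiag : ∑ p ∈ (univ : Finset V).diag, (A ∅ p.1 + A ∅ p.2) = 2 := by
      rw [Finset.sum_diag]
      simp [Finset.sum_add_distrib, hf1]
      norm_num
    have hoff : ∑ p ∈ (univ : Finset V).offDiag, (A ∅ p.1 + A ∅ p.2) = 2 * n - 2 := by
      have hu := Finset.sum_union (f := fun p : V × V => A ∅ p.1 + A ∅ p.2)
        (Finset.disjoint_diag_offDiag (univ : Finset V))
      rw [Finset.diag_union_offDiag, hprod, hdiag] at hu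
      linarith
    have hkey : ∃ p ∈ (univ : Finset V).offDiag, A ∅ p.1 + A ∅ p.2 ≤ 2 / n := by
      apply Finset.exists_le_of_sum_le
      · rw [← Finset.card_pos, Finset.offDiag_card, Finset.card_univ, ← hn]
        have h2n : 2 * n ≤ n * n := Nat.mul_le_mul_right n hn2
        omega
      · apply le_of_eq
        have hle : n ≤ n * n := Nat.le_mul_of_pos_left n (by omega)
        rw [hoff, Finset.sum_const, Finset.offDiag_card, Finset.card_univ, ← hn,
          nsmul_eq_mul, Nat.cast_sub hle]
        push_cast
        field_simp
    obtain ⟨p, hpmem, hple⟩ := hkey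
    obtain ⟨-, -, hp12⟩ := Finset.mem_offDiag.mp hpmem
    obtain ⟨i, hi⟩ := hreach p.1 p.2 hp12
    have hend : A ∅ (s i) + A ∅ (d i) ≤ 2 / n := by
      rcases hi with ⟨h1, h2⟩ | ⟨h1, h2⟩
      · rw [h1, h2]; exact hple
      · rw [h1, h2, add_comm]; exact hple
    have hbdd : BddBelow { y : ℝ | ∃ i : ι, y = AdvSucc s d edges (AllOrNothing edges α) A i } := by
      refine ⟨0, ?_⟩
      rintro y ⟨i, rfl⟩
      exact succ_bounds A hA i
    refine le_trans (csInf_le hbdd ⟨i, rfl⟩) ?_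
    rw [succ_eq, hM]
    have h1 : A (edges i) (s i) + A (edges i) (d i) ≤ 1 := pair_le A hA _ _ _ (hsd i)
    have h2 : (0:ℝ) ≤ 1 - α := by linarith
    nlinarith [(hA (edges i)).1 (s i), (hA (edges i)).1 (d i)]
  have hsup : sSup { x : ℝ | ∃ A, ValidAdv A ∧
      x = sInf { y : ℝ | ∃ i : ι, y = AdvSucc s d edges (AllOrNothing edges α) A i } } = M := by
    apply le_antisymm
    · exact csSup_le ⟨M, hMmem⟩ hub
    · exact le_csSup ⟨M, hub⟩ hMmem
  rw [Privacy, hsup, hM]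
  field_simp
  ring
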